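/- For every n ≥ 3 there exists a set S of n points in general position such that every plane spanning tree on S with maximum vertex degree at most n−2 has some vertex with maximum incident angle at most 3π/2 + ε (for any prescribed ε > 0). -/

import Mathlib

/-!
Take n − 1 points of the parabola `y = x²` clustered near the origin and one far point
`p = (M, M²)` on it; distinct points of a parabola are never collinear. Chords inside the
cluster have slope close to `0` and chords from the cluster to `p` have slope close to `M`, so
at every cluster point `q` the directions towards `p` and towards another cluster point make an
angle of at least `π/2 - η`. If `p` has degree `< n - 1` in a spanning tree, some cluster point
is not adjacent to `p`, and the tree path from it to `p` ends with `s → q → p` for cluster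
points `s, q`. Both edge directions at `q` lie in the cone of half-angle `π - φ/2`, so
`π/2 - η ≤ 2π - φ`.
-/

open scoped Classical
open EuclideanGeometry

noncomputable section

abbrev Pt := EuclideanSpace ℝ (Fin 2)

/-- No three points of `S` are collinear. -/
def GenPos (S : Finset Pt) : Prop :=
  ∀ p ∈ S, ∀ q ∈ S, ∀ r ∈ S, p ≠ q → p ≠ r → q ≠ r →
    ¬ Collinear ℝ ({p, q, r} : Set Pt)

/-- A plane straight-line graph on the finite point set `S`: vertices are points of `S`,
edges are recorded as ordered pairs closed under swapping, and two edges that are not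
the same unordered pair may only meet at common endpoints. -/
structure PSLG (S : Finset Pt) where
  E : Finset (Pt × Pt)
  symm : ∀ e ∈ E, (e.2, e.1) ∈ E
  endpts : ∀ e ∈ E, e.1 ∈ S ∧ e.2 ∈ S
  ne : ∀ e ∈ E, e.1 ≠ e.2
  noncross : ∀ e ∈ E, ∀ f ∈ E, e ≠ f → e ≠ (f.2, f.1) →
    ∀ x, x ∈ segment ℝ e.1 e.2 → x ∈ segment ℝ f.1 f.2 →
      (x = e.1 ∨ x = e.2) ∧ (x = f.1 ∨ x = f.2)

/-- The degree of the point `p` in `G`. -/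
def PSLG.deg {S : Finset Pt} (G : PSLG S) (p : Pt) : ℕ :=
  (G.E.filter fun e => e.1 = p).card

/-- The point `p` has an incident angle of size at least `φ` in `G`: all edge directions
at `p` fit in a closed cone of half-angle `π - φ / 2` (for `p` of degree ≤ 1 the maximum
incident angle is `2π`, and this condition holds trivially). -/
def VertexOpen {S : Finset Pt} (G : PSLG S) (p : Pt) (φ : ℝ) : Prop :=
  ∃ d : Pt, d ≠ 0 ∧ ∀ q : Pt, (p, q) ∈ G.E →
    InnerProductGeometry.angle d (q - p) ≤ Real.pi - φ / 2

/-- `G` is `φ`-open: every vertex has an incident angle of size at least `φ`. -/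
def PSLG.IsPhiOpen {S : Finset Pt} (G : PSLG S) (φ : ℝ) : Prop :=
  ∀ p ∈ S, VertexOpen G p φ

/-- `G` is connected on `S`. -/
def PSLG.Connected {S : Finset Pt} (G : PSLG S) : Prop :=
  ∀ p ∈ S, ∀ q ∈ S, Relation.ReflTransGen (fun a b => (a, b) ∈ G.E) p q

/-- `G` is a spanning tree of `S`: connected and with the minimum possible number of
edges (each undirected edge is recorded twice). -/
def PSLG.IsSpanningTree {S : Finset Pt} (G : PSLG S) : Prop :=
  G.Connected ∧ G.E.card = 2 * (S.card - 1)

/-- `G` is a (non-crossing Hamiltonian) spanning path of `S`: a spanning tree of maximum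
vertex degree at most two. -/
def PSLG.IsSpanningPath {S : Finset Pt} (G : PSLG S) : Prop :=
  G.IsSpanningTree ∧ ∀ p ∈ S, G.deg p ≤ 2

/-- `S` is in convex position. -/
def ConvexPos (S : Finset Pt) : Prop :=
  ∀ p ∈ S, p ∉ convexHull ℝ (↑(S.erase p) : Set Pt)

/-- `G` is a triangulation of `S`: a maximal plane straight-line graph, i.e. any further
edge between points of `S` would cross the existing graph. -/
def PSLG.IsTriangulation {S : Finset Pt} (G : PSLG S) : Prop :=
  ∀ p ∈ S, ∀ q ∈ S, p ≠ q → (p, q) ∉ G.E →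
    ∃ e ∈ G.E, ∃ x, x ∈ segment ℝ p q ∧ x ∈ segment ℝ e.1 e.2 ∧
      ¬((x = p ∨ x = q) ∧ (x = e.1 ∨ x = e.2))

end

open scoped RealInnerProductSpace
open Real

theorem Relation.ReflTransGen.exists_rel_rel_of_not_rel {α : Type*} {R : α → α → Prop}
    {c p : α} (h : Relation.ReflTransGen R c p) (hcp : c ≠ p) (hR : ¬ R c p) :
    ∃ q s, R s q ∧ R q p ∧ s ≠ p ∧ q ≠ p := by
  induction h using Relation.ReflTransGen.head_induction_on with
  | refl => exact absurd rfl hcp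
  | @head a b hab hbp ih =>
    obtain rfl | hbp' := eq_or_ne b p
    · exact absurd hab hR
    by_cases hb : R b p
    · exact ⟨b, a, hab, hb, hcp, hbp'⟩
    · exact ih hbp' hb

namespace PSLG

variable {S : Finset Pt} (T : PSLG S)

theorem exists_not_adj_of_deg_lt {p : Pt} (hp : p ∈ S) (hdeg : T.deg p < S.card - 1) :
    ∃ c ∈ S, c ≠ p ∧ (c, p) ∉ T.E := by
  by_contra! hadj
  have : (S.erase p).card ≤ T.deg p := by
    refine Finset.card_le_card_of_injOn (fun c => (p, c)) (fun c hc => ?_)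
      fun _ _ _ _ h => congrArg Prod.snd h
    have hc := Finset.mem_erase.1 hc
    exact Finset.mem_filter.2 ⟨T.symm _ (hadj c hc.2 hc.1), rfl⟩
  rw [Finset.card_erase_of_mem hp] at this
  omega

theorem exists_adj_adj_of_deg_lt (hT : T.Connected) {p : Pt} (hp : p ∈ S)
    (hdeg : T.deg p < S.card - 1) :
    ∃ q ∈ S, ∃ s ∈ S, (q, p) ∈ T.E ∧ (q, s) ∈ T.E ∧ q ≠ p ∧ s ≠ p := by
  obtain ⟨c, hc, hcp, hcE⟩ := T.exists_not_adj_of_deg_lt hp hdeg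
  obtain ⟨q, s, hsq, hqp, hsp, hqp'⟩ :=
    (hT c hc p hp).exists_rel_rel_of_not_rel hcp hcE
  exact ⟨q, (T.endpts _ hqp).1, s, (T.endpts _ hsq).1, hqp, T.symm _ hsq, hqp', hsp⟩

end PSLG

theorem VertexOpen.le_two_pi_sub_angle {S : Finset Pt} {T : PSLG S} {p q r : Pt} {φ : ℝ}
    (h : VertexOpen T p φ) (hq : (p, q) ∈ T.E) (hr : (p, r) ∈ T.E) :
    φ ≤ 2 * π - InnerProductGeometry.angle (q - p) (r - p) := by
  obtain ⟨d, -, hd⟩ := h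
  have := InnerProductGeometry.angle_le_angle_add_angle (q - p) d (r - p)
  rw [InnerProductGeometry.angle_comm (q - p) d] at this
  linarith [hd q hq, hd r hr]

theorem PSLG.exists_vertex_le_two_pi_sub {S : Finset Pt} (T : PSLG S) (hT : T.Connected)
    {p : Pt} (hp : p ∈ S) (hdeg : T.deg p < S.card - 1) {θ : ℝ}
    (hθ : ∀ q ∈ S, ∀ s ∈ S, q ≠ p → s ≠ p →
      θ ≤ InnerProductGeometry.angle (p - q) (s - q)) :
    ∃ q ∈ S, ∀ φ, VertexOpen T q φ → φ ≤ 2 * π - θ := by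
  obtain ⟨q, hq, s, hs, hqp, hqs, hqp', hsp⟩ := T.exists_adj_adj_of_deg_lt hT hp hdeg
  refine ⟨q, hq, fun φ hφ => ?_⟩
  linarith [hφ.le_two_pi_sub_angle hqp hqs, hθ q hq s hs hqp' hsp]

theorem InnerProductGeometry.pi_div_two_sub_le_angle {V : Type*} [NormedAddCommGroup V]
    [InnerProductSpace ℝ V] {x y : V} {η : ℝ} (hη0 : 0 ≤ η) (hη : η ≤ π / 2)
    (h : ⟪x, y⟫ ≤ sin η * (‖x‖ * ‖y‖)) : π / 2 - η ≤ InnerProductGeometry.angle x y := by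
  have hcos : ⟪x, y⟫ / (‖x‖ * ‖y‖) ≤ sin η :=
    div_le_of_le_mul₀ (by positivity) (sin_nonneg_of_nonneg_of_le_pi hη0 (by linarith)) h
  calc π / 2 - η = arccos (sin η) := by
        rw [arccos_eq_pi_div_two_sub_arcsin, arcsin_sin (by linarith) hη]
    _ ≤ arccos (⟪x, y⟫ / (‖x‖ * ‖y‖)) := arccos_le_arccos hcos

theorem abs_real_inner_smul_smul_le {V : Type*} [NormedAddCommGroup V] [InnerProductSpace ℝ V]
    {x y : V} {K : ℝ} (h : |⟪x, y⟫| ≤ K * (‖x‖ * ‖y‖)) (c d : ℝ) :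
    |⟪c • x, d • y⟫| ≤ K * (‖c • x‖ * ‖d • y‖) := by
  rw [real_inner_smul_left, real_inner_smul_right, norm_smul, norm_smul, abs_mul, abs_mul,
    Real.norm_eq_abs, Real.norm_eq_abs]
  calc |c| * (|d| * |⟪x, y⟫|) ≤ |c| * (|d| * (K * (‖x‖ * ‖y‖))) := by gcongr
    _ = K * (|c| * ‖x‖ * (|d| * ‖y‖)) := by ring

theorem abs_inner_slope_le {s : ℝ} (hs : 0 < s) (t : ℝ) :
    |⟪!₂[1, s], !₂[1, t]⟫| ≤ (1 / s + |t|) * (‖!₂[(1 : ℝ), s]‖ * ‖!₂[(1 : ℝ), t]‖) := by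
  have hs' : s ≤ ‖!₂[(1 : ℝ), s]‖ := by
    simpa [abs_of_pos hs] using PiLp.norm_apply_le !₂[(1 : ℝ), s] 1
  have ht' : 1 ≤ ‖!₂[(1 : ℝ), t]‖ := by simpa using PiLp.norm_apply_le !₂[(1 : ℝ), t] 0
  have hinner : ⟪!₂[(1 : ℝ), s], !₂[1, t]⟫ = 1 + s * t := by
    simp [PiLp.inner_apply, Fin.sum_univ_two, mul_comm]
  calc |⟪!₂[(1 : ℝ), s], !₂[1, t]⟫| ≤ 1 + s * |t| := by
        rw [hinner]
        exact (abs_add_le _ _).trans (by rw [abs_one, abs_mul, abs_of_pos hs])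
    _ = (1 / s + |t|) * (s * 1) := by field_simp
    _ ≤ (1 / s + |t|) * (‖!₂[(1 : ℝ), s]‖ * ‖!₂[(1 : ℝ), t]‖) := by gcongr

def parabola (t : ℝ) : Pt := !₂[t, t ^ 2]

theorem parabola_injective : Function.Injective parabola := fun a b h => by
  simpa [parabola] using congrArg (· 0) h

theorem parabola_sub_parabola (a b : ℝ) : parabola b - parabola a = (b - a) • !₂[1, a + b] := by
  ext i
  fin_cases i <;> simp [parabola]
  ring

theorem not_collinear_parabola {a b c : ℝ} (hab : a ≠ b) (hac : a ≠ c) (hbc : b ≠ c) :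
    ¬ Collinear ℝ ({parabola a, parabola b, parabola c} : Set Pt) := by
  rw [collinear_iff_of_mem (Set.mem_insert _ _)]
  rintro ⟨v, hv⟩
  obtain ⟨tb, htb⟩ := hv (parabola b) (by simp)
  obtain ⟨tc, htc⟩ := hv (parabola c) (by simp)
  rw [vadd_eq_add, ← sub_eq_iff_eq_add, parabola_sub_parabola] at htb htc
  have hb0 := congrArg (· 0) htb
  have hb1 := congrArg (· 1) htb
  have hc0 := congrArg (· 0) htc
  have hc1 := congrArg (· 1) htc
  simp only [PiLp.smul_apply, smul_eq_mul, Matrix.cons_val_zero, Matrix.cons_val_one,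
    Matrix.cons_val_fin_one, mul_one] at hb0 hb1 hc0 hc1
  have : (b - a) * (c - a) * (c - b) = 0 := by
    linear_combination (b - a) * hc1 - (c - a) * hb1 + tc * v 1 * hb0 - tb * v 1 * hc0
  simp [sub_eq_zero, hab.symm, hac.symm, hbc.symm] at this

theorem genPos_image_parabola (X : Finset ℝ) : GenPos (X.image parabola) := by
  intro p hp q hq r hr hpq hpr hqr
  obtain ⟨a, -, rfl⟩ := Finset.mem_image.1 hp
  obtain ⟨b, -, rfl⟩ := Finset.mem_image.1 hq
  obtain ⟨c, -, rfl⟩ := Finset.mem_image.1 hr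
  exact not_collinear_parabola (ne_of_apply_ne _ hpq) (ne_of_apply_ne _ hpr)
    (ne_of_apply_ne _ hqr)

theorem pi_div_two_sub_le_angle_parabola {a b M η : ℝ} (hη0 : 0 ≤ η) (hη : η ≤ π / 2)
    (hs : 0 < a + M) (h : 1 / (a + M) + |a + b| ≤ sin η) :
    π / 2 - η ≤
      InnerProductGeometry.angle (parabola M - parabola a) (parabola b - parabola a) := by
  refine InnerProductGeometry.pi_div_two_sub_le_angle hη0 hη ((le_abs_self _).trans ?_)
  rw [parabola_sub_parabola, parabola_sub_parabola]
  refine (abs_real_inner_smul_smul_le (abs_inner_slope_le hs (a + b)) _ _).trans ?_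
  gcongr

theorem exists_finset_card_eq_subset_Icc (m : ℕ) {r : ℝ} (hr : 0 < r) :
    ∃ C : Finset ℝ, C.card = m ∧ ∀ a ∈ C, a ∈ Set.Icc 0 r := by
  refine ⟨(Finset.range m).image fun i : ℕ => r / (i + 1), ?_, ?_⟩
  · refine (Finset.card_image_of_injective _ fun i j h => ?_).trans (Finset.card_range m)
    field_simp at h
    exact_mod_cast (by linarith : (i : ℝ) = j)
  · intro a ha
    obtain ⟨i, -, rfl⟩ := Finset.mem_image.1 ha
    exact ⟨by positivity, div_le_self hr.le (by simp)⟩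

theorem pi_div_two_sub_le_angle_parabola_of_mem_Icc {a b η : ℝ} (hη0 : 0 < η) (hη : η ≤ π / 2)
    (ha : a ∈ Set.Icc 0 (sin η / 4)) (hb : b ∈ Set.Icc 0 (sin η / 4)) :
    π / 2 - η ≤ InnerProductGeometry.angle (parabola (2 / sin η) - parabola a)
      (parabola b - parabola a) := by
  have hσ : 0 < sin η := sin_pos_of_pos_of_lt_pi hη0 (by linarith [pi_pos])
  have hM : 0 < 2 / sin η := by positivity
  refine pi_div_two_sub_le_angle_parabola hη0.le hη (by linarith [ha.1]) ?_
  have h1 : 1 / (a + 2 / sin η) ≤ sin η / 2 := by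
    calc 1 / (a + 2 / sin η) ≤ 1 / (2 / sin η) :=
          one_div_le_one_div_of_le hM (by linarith [ha.1])
      _ = sin η / 2 := one_div_div _ _
  rw [abs_of_nonneg (by linarith [ha.1, hb.1])]
  linarith [ha.2, hb.2]

theorem exists_parabola_cluster (m : ℕ) {η : ℝ} (hη0 : 0 < η) (hη : η ≤ π / 2) :
    ∃ S : Finset Pt, ∃ p ∈ S, S.card = m + 1 ∧ GenPos S ∧
      ∀ q ∈ S, ∀ s ∈ S, q ≠ p → s ≠ p →
        π / 2 - η ≤ InnerProductGeometry.angle (p - q) (s - q) := by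
  have hσ : 0 < sin η := sin_pos_of_pos_of_lt_pi hη0 (by linarith [pi_pos])
  obtain ⟨C, hCcard, hC⟩ := exists_finset_card_eq_subset_Icc m (div_pos hσ four_pos)
  have hMC : 2 / sin η ∉ C := fun hM => by
    have : 2 ≤ 2 / sin η := (le_div_iff₀ hσ).2 (by linarith [sin_le_one η])
    linarith [(hC _ hM).2, sin_le_one η]
  refine ⟨(insert (2 / sin η) C).image parabola, parabola (2 / sin η),
    Finset.mem_image_of_mem _ (Finset.mem_insert_self _ _), ?_, genPos_image_parabola _, ?_⟩
  · rw [Finset.card_image_of_injective _ parabola_injective, Finset.card_insert_of_notMem hMC,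
      hCcard]
  rintro _ hq _ hs hqM hsM
  obtain ⟨a, ha, rfl⟩ := Finset.mem_image.1 hq
  obtain ⟨b, hb, rfl⟩ := Finset.mem_image.1 hs
  exact pi_div_two_sub_le_angle_parabola_of_mem_Icc hη0 hη
    (hC a (Finset.mem_of_mem_insert_of_ne ha (ne_of_apply_ne _ hqM)))
    (hC b (Finset.mem_of_mem_insert_of_ne hb (ne_of_apply_ne _ hsM)))

/-- For every `ε > 0` and every `n ≥ 3` there is a set `S` of `n` points in general
position such that every plane spanning tree on `S` of maximum vertex degree at most
`n - 2` has a vertex whose maximum incident angle is at most `3π/2 + ε`. -/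
theorem stmt11 (ε : ℝ) (hε : 0 < ε) (n : ℕ) (hn : 3 ≤ n) :
    ∃ S : Finset Pt, S.card = n ∧ GenPos S ∧
      ∀ T : PSLG S, T.IsSpanningTree → (∀ p ∈ S, T.deg p ≤ n - 2) →
        ∃ p ∈ S, ∀ φ : ℝ, VertexOpen T p φ → φ ≤ 3 * Real.pi / 2 + ε := by
  have hη0 : 0 < min ε 1 := lt_min hε one_pos
  have hηπ : min ε 1 ≤ π / 2 := (min_le_right _ _).trans (by linarith [pi_gt_three])
  obtain ⟨S, p, hp, hcard, hgen, hangle⟩ := exists_parabola_cluster (n - 1) hη0 hηπ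
  refine ⟨S, by omega, hgen, fun T hT hdeg => ?_⟩
  obtain ⟨q, hq, hφ⟩ := T.exists_vertex_le_two_pi_sub hT.1 hp
    (by have := hdeg p hp; omega) hangle
  exact ⟨q, hq, fun φ h => (hφ φ h).trans (by linarith [min_le_left ε 1])⟩
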